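/- arXiv:1303.2363 — 5 statements merged into one kernel-verified Lean document; each statement's English description precedes it below -/
import Mathlib

section
/- Let A ⊆ B be integral domains, let f, g ∈ A[x] be non-zero polynomials such that g divides f in B[x], and let γ be the leading coefficient of g. Then g divides f in the localization A[1/γ][x] (the ring of polynomials over the ring of fractions of A with respect to powers of γ). -/
open Polynomial

/-!
Over `A[1/γ]` the leading coefficient of `g` becomes a unit, so `g` may be replaced by a monic
associate, and divisibility by a monic polynomial is detected after any injective base change
(the remainder of monic division commutes with the base change). The lift of `A → Frac(B)` to
`A[1/γ]` is such a base change, and `g ∣ f` already holds over `Frac(B)`.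
-/

theorem IsLocalization.lift_injective_of_injective {R S P : Type*} [CommSemiring R]
    [CommSemiring S] [Algebra R S] {M : Submonoid R} [IsLocalization M S] [CommSemiring P]
    {g : R →+* P} (hg : ∀ y : M, IsUnit (g y)) (hinj : Function.Injective g) :
    Function.Injective (lift hg : S → P) :=
  (lift_injective_iff hg).mpr fun x y =>
    ⟨fun h => by simpa only [lift_eq] using congrArg (lift hg) h, fun h => congrArg _ (hinj h)⟩

namespace Polynomial

theorem map_dvd_map_iff_of_isUnit_leadingCoeff {R S : Type*} [CommRing R] [CommRing S]
    (φ : R →+* S) (hφ : Function.Injective φ) {p q : R[X]} (hp : IsUnit p.leadingCoeff) :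
    p.map φ ∣ q.map φ ↔ p ∣ q := by
  have hmonic : (C (↑hp.unit⁻¹ : R) * p).Monic := by
    simpa only [Units.smul_def, smul_eq_C_mul] using monic_of_isUnit_leadingCoeff_inv_smul hp
  have hunit : IsUnit (C (↑hp.unit⁻¹ : R)) := isUnit_C.mpr (Units.isUnit _)
  rw [← hunit.mul_left_dvd, ← map_dvd_map φ hφ hmonic, Polynomial.map_mul, map_C,
    (isUnit_C.mpr ((Units.isUnit _).map φ)).mul_left_dvd]

end Polynomial

theorem dvd_map_localization_away_general {A B : Type} [CommRing A] [CommRing B]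
    [IsDomain B] [Algebra A B] (hinj : Function.Injective (algebraMap A B))
    (f g : A[X]) (hg : g ≠ 0)
    (hdvd : g.map (algebraMap A B) ∣ f.map (algebraMap A B)) :
    g.map (algebraMap A (Localization.Away g.leadingCoeff)) ∣
      f.map (algebraMap A (Localization.Away g.leadingCoeff)) := by
  set γ := g.leadingCoeff
  let ψ : A →+* FractionRing B := (algebraMap B (FractionRing B)).comp (algebraMap A B)
  have hψ : Function.Injective ψ := (IsFractionRing.injective B (FractionRing B)).comp hinj
  have hψγ : IsUnit (ψ γ) :=
    isUnit_iff_ne_zero.mpr ((map_ne_zero_iff ψ hψ).mpr (leadingCoeff_ne_zero.mpr hg))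
  let φ := IsLocalization.Away.lift (S := Localization.Away γ) γ hψγ
  have hφψ : φ.comp (algebraMap A _) = ψ := IsLocalization.Away.lift_comp γ hψγ
  have hφ : Function.Injective φ := IsLocalization.lift_injective_of_injective _ hψ
  have hloc : Function.Injective (algebraMap A (Localization.Away γ)) :=
    Function.Injective.of_comp (f := φ) (by rwa [← RingHom.coe_comp, hφψ])
  have hlc : IsUnit (g.map (algebraMap A (Localization.Away γ))).leadingCoeff := by
    rw [leadingCoeff_map_of_injective hloc]
    exact IsLocalization.Away.algebraMap_isUnit γ
  rw [← map_dvd_map_iff_of_isUnit_leadingCoeff φ hφ hlc, map_map, map_map, hφψ]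
  simpa only [map_map] using map_dvd (algebraMap B (FractionRing B)) hdvd

/-- Let `A ⊆ B` be integral domains, `f, g ∈ A[x]` non-zero with `g ∣ f` in `B[x]`, and let
`γ` be the leading coefficient of `g`. Then `g ∣ f` in `A[1/γ][x]`, where `A[1/γ]` is the
localization of `A` away from `γ`. -/
theorem dvd_map_localization_away {A B : Type} [CommRing A] [IsDomain A] [CommRing B]
    [IsDomain B] [Algebra A B] (hinj : Function.Injective (algebraMap A B))
    (f g : A[X]) (hf : f ≠ 0) (hg : g ≠ 0)
    (hdvd : g.map (algebraMap A B) ∣ f.map (algebraMap A B)) :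
    g.map (algebraMap A (Localization.Away g.leadingCoeff)) ∣
      f.map (algebraMap A (Localization.Away g.leadingCoeff)) :=
  dvd_map_localization_away_general hinj f g hg hdvd
end

section
/- Let A be a UFD and let f, g ∈ A[x] be non-zero polynomials. Then gcd(f, g) has positive degree (is non-constant) if and only if the resultant res(f, g) equals 0. -/
open Polynomial

/-- The Sylvester matrix of two polynomials `f, g` over a commutative ring: a square matrix
of size `deg f + deg g` whose first `deg g` rows are shifted copies of the coefficients of
`f` and whose last `deg f` rows are shifted copies of the coefficients of `g`. -/
noncomputable def sylvester {A : Type} [CommRing A] (f g : Polynomial A) :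
    Matrix (Fin (g.natDegree + f.natDegree)) (Fin (g.natDegree + f.natDegree)) A :=
  fun i j =>
    if (i : ℕ) < g.natDegree then
      if (i : ℕ) ≤ (j : ℕ) ∧ (j : ℕ) ≤ (i : ℕ) + f.natDegree then
        f.coeff (f.natDegree + i - j)
      else 0
    else
      if (i : ℕ) - g.natDegree ≤ (j : ℕ) ∧ (j : ℕ) ≤ ((i : ℕ) - g.natDegree) + g.natDegree then
        g.coeff (g.natDegree + ((i : ℕ) - g.natDegree) - j)
      else 0

open scoped Classical in
/-- The resultant of two polynomials: the determinant of their Sylvester matrix, with the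
convention `res (h, 0) = res (0, h) = 0`. -/
noncomputable def resultant {A : Type} [CommRing A] (f g : Polynomial A) : A :=
  if f = 0 ∨ g = 0 then 0 else (_root_.sylvester f g).det

/-!
Up to reversing the rows inside each of its two blocks and reversing all columns, the Sylvester
matrix here is the transpose of Mathlib's `Polynomial.sylvester g f`, so it is singular exactly
when `Polynomial.resultant f g` vanishes. Over the fraction field `K` of `A` this happens iff the
images of `f` and `g` in `K[X]` are not coprime. By Gauss's lemma, a common factor of positive
degree in `K[X]`, cleared of denominators and made primitive, already divides `f` and `g` in
`A[X]`.
-/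

open scoped Matrix

theorem Matrix.det_submatrix_perm_eq_zero_iff {n R : Type*} [DecidableEq n] [Fintype n]
    [CommRing R] (M : Matrix n n R) (σ τ : Equiv.Perm n) :
    (M.submatrix σ τ).det = 0 ↔ M.det = 0 := by
  have hdet : (M.submatrix σ τ).det = Equiv.Perm.sign τ * (Equiv.Perm.sign σ * M.det) := by
    rw [← det_permute, ← det_permute']
    rfl
  have hunit : ∀ π : Equiv.Perm n, IsUnit ((Equiv.Perm.sign π : ℤ) : R) := fun π =>
    (Equiv.Perm.sign π).isUnit.map (Int.castRingHom R)
  rw [hdet, (hunit τ).mul_right_eq_zero, (hunit σ).mul_right_eq_zero]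

def Fin.blockRevPerm (m n : ℕ) : Equiv.Perm (Fin (m + n)) :=
  finSumFinEquiv.symm.trans ((Fin.revPerm.sumCongr Fin.revPerm).trans finSumFinEquiv)

namespace Polynomial

theorem sylvester_eq_submatrix_transpose {A : Type} [CommRing A] (f g : A[X]) :
    _root_.sylvester f g = (g.sylvester f g.natDegree f.natDegree)ᵀ.submatrix
      (Fin.blockRevPerm g.natDegree f.natDegree) Fin.revPerm := by
  ext i j
  have := j.isLt
  induction i using Fin.addCases with
  | left i | right i =>
    have := i.isLt
    simp only [_root_.sylvester, sylvester, Fin.blockRevPerm, Fin.val_castAdd, Fin.val_natAdd,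
      Fin.is_lt, add_lt_iff_neg_left, not_lt_zero, ↓reduceIte, add_tsub_cancel_left, Set.mem_Icc,
      Equiv.coe_trans, Matrix.submatrix_apply, Function.comp_apply,
      finSumFinEquiv_symm_apply_castAdd, finSumFinEquiv_symm_apply_natAdd, Equiv.sumCongr_apply,
      Sum.map_inl, Sum.map_inr, Fin.revPerm_apply, finSumFinEquiv_apply_left,
      finSumFinEquiv_apply_right, Matrix.transpose_apply, Matrix.of_apply, Fin.val_rev,
      tsub_le_iff_right, Fin.addCases_left, Fin.addCases_right]
    split_ifs <;> first | rfl | omega | (congr 1; omega)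

section FractionRing

open IsLocalization nonZeroDivisors

variable {A K : Type*} [CommRing A] [Field K] [Algebra A K] [IsFractionRing A K]

theorem resultant_eq_zero_iff_not_isCoprime_map {f : A[X]} (hf : f ≠ 0) (g : A[X]) :
    f.resultant g = 0 ↔ ¬ IsCoprime (f.map (algebraMap A K)) (g.map (algebraMap A K)) := by
  have hinj := IsFractionRing.injective A K
  rw [← (injective_iff_map_eq_zero' _).mp hinj, ← resultant_map_map,
    ← natDegree_map_eq_of_injective hinj f, ← natDegree_map_eq_of_injective hinj g,
    resultant_eq_zero_iff]
  exact and_iff_right (.inl ((Polynomial.map_ne_zero_iff hinj).mpr hf))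

variable [IsDomain A] [IsGCDMonoid A]

theorem exists_isPrimitive_map_associated {p : K[X]} (hp : p ≠ 0) :
    ∃ q : A[X], q.IsPrimitive ∧ Associated (q.map (algebraMap A K)) p := by
  let : NormalizedGCDMonoid A := Classical.arbitrary _
  set r := integerNormalization A⁰ p
  obtain ⟨b, hb, hrb⟩ := integerNormalization_spec A⁰ p
  have hr : r ≠ 0 := by rwa [Ne, IsFractionRing.integerNormalization_eq_zero_iff]
  have hb0 : algebraMap A K b ≠ 0 := IsFractionRing.to_map_ne_zero_of_mem_nonZeroDivisors hb
  have hc : algebraMap A K r.content ≠ 0 := by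
    simpa [IsFractionRing.to_map_eq_zero_iff, content_eq_zero_iff] using hr
  refine ⟨r.primPart, r.isPrimitive_primPart, ?_⟩
  calc Associated (r.primPart.map (algebraMap A K))
        (C (algebraMap A K r.content) * r.primPart.map (algebraMap A K)) :=
        ((associated_isUnit_mul_left_iff (isUnit_C.mpr hc.isUnit)).mpr .rfl).symm
    _ = r.map (algebraMap A K) := by
        rw [← map_C, ← Polynomial.map_mul, ← eq_C_content_mul_primPart]
    _ = C (algebraMap A K b) * p := by rw [hrb, Algebra.smul_def, algebraMap_apply]
    Associated _ p := (associated_isUnit_mul_left_iff (isUnit_C.mpr hb0.isUnit)).mpr .rfl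

theorem exists_dvd_dvd_natDegree_pos_iff_not_isCoprime_map {f : A[X]} (hf : f ≠ 0) (g : A[X]) :
    (∃ d : A[X], d ∣ f ∧ d ∣ g ∧ 0 < d.natDegree) ↔
      ¬ IsCoprime (f.map (algebraMap A K)) (g.map (algebraMap A K)) := by
  have hinj := IsFractionRing.injective A K
  constructor
  · rintro ⟨d, hdf, hdg, hd⟩ hcop
    have hunit := hcop.isUnit_of_dvd' (Polynomial.map_dvd _ hdf) (Polynomial.map_dvd _ hdg)
    rw [← natDegree_map_eq_of_injective hinj, natDegree_eq_zero_of_isUnit hunit] at hd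
    exact hd.false
  · intro hcop
    obtain ⟨e, hef, heg, he⟩ : ∃ e, e ∣ f.map (algebraMap A K) ∧ e ∣ g.map (algebraMap A K) ∧
        ¬ IsUnit e := by
      simpa [← isRelPrime_iff_isCoprime, IsRelPrime] using hcop
    have he0 : e ≠ 0 := by
      rintro rfl
      exact hf (map_injective _ hinj (by simpa using hef))
    obtain ⟨q, hq, hqe⟩ := exists_isPrimitive_map_associated (A := A) he0
    refine ⟨q, hq.dvd_of_fraction_map_dvd_fraction_map (hqe.dvd.trans hef),
      hq.dvd_of_fraction_map_dvd_fraction_map (hqe.dvd.trans heg), ?_⟩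
    rw [← natDegree_map_eq_of_injective hinj, natDegree_pos_iff_degree_pos,
      degree_eq_degree_of_associated hqe]
    exact degree_pos_of_ne_zero_of_nonunit he0 he

end FractionRing

end Polynomial

theorem resultant_eq_zero_iff_polynomial_resultant_eq_zero {A : Type} [CommRing A]
    {f g : A[X]} (hf : f ≠ 0) (hg : g ≠ 0) : _root_.resultant f g = 0 ↔ f.resultant g = 0 := by
  rw [_root_.resultant, if_neg (not_or.mpr ⟨hf, hg⟩), Polynomial.sylvester_eq_submatrix_transpose,
    Matrix.det_submatrix_perm_eq_zero_iff, Matrix.det_transpose, Polynomial.resultant_comm f g,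
    ((isUnit_neg_one.pow _).mul_right_eq_zero)]
  rfl

/-- Over a UFD `A`, two non-zero polynomials `f, g ∈ A[x]` have a non-constant gcd (i.e. a
common divisor of positive degree) if and only if their resultant vanishes. -/
theorem gcd_nonconstant_iff_resultant_eq_zero {A : Type} [CommRing A] [IsDomain A]
    [UniqueFactorizationMonoid A] (f g : Polynomial A) (hf : f ≠ 0) (hg : g ≠ 0) :
    (∃ d : Polynomial A, d ∣ f ∧ d ∣ g ∧ 0 < d.natDegree) ↔ _root_.resultant f g = 0 := by
  rw [resultant_eq_zero_iff_polynomial_resultant_eq_zero hf hg,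
    resultant_eq_zero_iff_not_isCoprime_map (K := FractionRing A) hf,
    exists_dvd_dvd_natDegree_pos_iff_not_isCoprime_map (K := FractionRing A) hf]
end

section
/- Let p be a prime, k ≥ 1, and A ⊆ Z/pZ a finite set. Suppose A = {a_1,...,a_n}, and let L_1, L_2 be collections of linear polynomials f ∈ Z[x_1,...,x_n] of ℓ1-norm at most k (including constant term), such that every f ∈ L_1 vanishes at (a_1,...,a_n) in Z/pZ and every f ∈ L_2 does not. If n < log_k(p) − 1, then there exist b_1,...,b_n in the localization Z_{(p)} of Z at the prime ideal (p) such that the canonical ring homomorphism Z_{(p)} → Z/pZ maps b_i to a_i, every f ∈ L_1 vanishes at (b_1,...,b_n), and no f ∈ L_2 vanishes at (b_1,...,b_n). -/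
/-!
Pigeonholing the vectors `(t • a) mod p`, `0 ≤ t ≤ k ^ n`, into `k ^ n` boxes gives a multiplier
`0 < Λ ≤ k ^ n` all of whose residues `r i ≡ Λ a i` satisfy `k |r i| < p`. Put `b i = r i / Λ`.
For a linear `f` of ℓ1-norm at most `k`, the integer `N = Λ f(b)` reduces to `Λ f(a)` mod `p` and
has `|N| < p` because also `k Λ ≤ k ^ (n + 1) < p`; so `f(b) = 0 ↔ N = 0 ↔ p ∣ N ↔ f(a) = 0`.
-/

/-- The ℓ1-norm of a multivariate integer polynomial. -/
noncomputable def l1Norm {n : ℕ} (f : MvPolynomial (Fin n) ℤ) : ℕ :=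
  ∑ m ∈ f.support, (f.coeff m).natAbs

open MvPolynomial Finset

namespace MvPolynomial

variable {σ R : Type*} [Fintype σ] [CommSemiring R] {f : MvPolynomial σ R}

theorem support_subset_of_totalDegree_le_one [DecidableEq σ] (hf : f.totalDegree ≤ 1) :
    f.support ⊆ insert 0 (univ.image fun i => Finsupp.single i 1) := by
  intro m hm
  rw [mem_insert, mem_image]
  rcases Nat.le_one_iff_eq_zero_or_eq_one.mp ((le_totalDegree hm).trans hf) with h | h
  · exact Or.inl ((Finsupp.degree_eq_zero_iff m).mp h)
  · obtain ⟨i, rfl⟩ := (Finsupp.sum_eq_one_iff m).mp h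
    exact Or.inr ⟨i, mem_univ _, rfl⟩

theorem sum_support_eq_of_totalDegree_le_one (hf : f.totalDegree ≤ 1) {M : Type*}
    [AddCommMonoid M] {g : (σ →₀ ℕ) → M} (hg : ∀ m, f.coeff m = 0 → g m = 0) :
    ∑ m ∈ f.support, g m = g 0 + ∑ i, g (Finsupp.single i 1) := by
  classical
  rw [sum_subset (support_subset_of_totalDegree_le_one hf)
      fun m _ hm => hg m (notMem_support_iff.mp hm),
    sum_insert (by simp [eq_comm, Finsupp.single_eq_zero]),
    sum_image fun i _ j _ h => Finsupp.single_left_injective one_ne_zero h]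

theorem aeval_eq_of_totalDegree_le_one {S : Type*} [CommSemiring S] [Algebra R S]
    (hf : f.totalDegree ≤ 1) (x : σ → S) :
    aeval x f = algebraMap R S (f.coeff 0) +
      ∑ i, algebraMap R S (f.coeff (Finsupp.single i 1)) * x i := by
  rw [aeval_def, eval₂_eq, sum_support_eq_of_totalDegree_le_one hf fun m hm => by simp [hm]]
  simp

end MvPolynomial

theorem l1Norm_eq_of_totalDegree_le_one {n : ℕ} {f : MvPolynomial (Fin n) ℤ}
    (hf : f.totalDegree ≤ 1) :
    l1Norm f = (f.coeff 0).natAbs + ∑ i, (f.coeff (Finsupp.single i 1)).natAbs :=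
  sum_support_eq_of_totalDegree_le_one hf fun m hm => by simp [hm]

theorem Int.abs_mul_add_sum_mul_lt {ι : Type*} (s : Finset ι) {k P c₀ x₀ : ℤ} {c x : ι → ℤ}
    (hk : 0 < k) (hx₀ : k * |x₀| < P) (hx : ∀ i ∈ s, k * |x i| < P)
    (hc : |c₀| + ∑ i ∈ s, |c i| ≤ k) :
    |c₀ * x₀ + ∑ i ∈ s, c i * x i| < P := by
  have hP : 0 ≤ P - 1 := by linarith [mul_nonneg hk.le (abs_nonneg x₀)]
  have : k * |c₀ * x₀ + ∑ i ∈ s, c i * x i| ≤ k * (P - 1) :=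
    calc k * |c₀ * x₀ + ∑ i ∈ s, c i * x i|
        ≤ k * (|c₀| * |x₀| + ∑ i ∈ s, |c i| * |x i|) := by
          gcongr
          refine (abs_add_le _ _).trans ?_
          rw [abs_mul]
          gcongr
          exact (abs_sum_le_sum_abs _ _).trans_eq (by simp only [abs_mul])
      _ = |c₀| * (k * |x₀|) + ∑ i ∈ s, |c i| * (k * |x i|) := by
          rw [mul_add, mul_sum, mul_left_comm]
          exact congrArg _ (sum_congr rfl fun _ _ => mul_left_comm _ _ _)
      _ ≤ |c₀| * (P - 1) + ∑ i ∈ s, |c i| * (P - 1) := by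
          gcongr with i hi
          · exact Int.le_sub_one_of_lt hx₀
          · exact Int.le_sub_one_of_lt (hx i hi)
      _ = (|c₀| + ∑ i ∈ s, |c i|) * (P - 1) := by rw [add_mul, sum_mul]
      _ ≤ k * (P - 1) := by gcongr
  linarith [le_of_mul_le_mul_left this hk]

theorem Nat.abs_sub_lt_of_div_eq_div {u v q : ℕ} (hq : 0 < q) (h : u / q = v / q) :
    |(u : ℤ) - v| < q := by
  have := Nat.div_add_mod u q
  have := Nat.div_add_mod v q
  have := Nat.mod_lt u hq
  have := Nat.mod_lt v hq
  rw [h] at *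
  rw [abs_lt]
  omega

theorem ZMod.exists_pos_le_pow_small_residues {ι : Type*} [Fintype ι] {p k : ℕ} [NeZero p]
    (hk : 0 < k) (a : ι → ZMod p) :
    ∃ (Λ : ℤ) (r : ι → ℤ), 0 < Λ ∧ Λ ≤ k ^ Fintype.card ι ∧
      (∀ i, k * |r i| < p) ∧ ∀ i, (r i : ZMod p) = Λ * a i := by
  classical
  -- `q = ⌈p / k⌉`: `k` boxes of width `q` cover `[0, p)`, while `k (q - 1) < p`.
  obtain ⟨q, hq⟩ : ∃ q, p ≤ q * k ∧ k * (q - 1) < p := by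
    refine ⟨(p + k - 1) / k, ?_⟩
    have := Nat.div_add_mod (p + k - 1) k
    have := Nat.mod_lt (p + k - 1) hk
    have := NeZero.pos p
    generalize (p + k - 1) / k = q at *
    generalize (p + k - 1) % k = m at *
    rw [Nat.mul_sub_one, mul_comm q]
    omega
  have hbox : ∀ (t : ℕ) (i : ι), ((t : ZMod p) * a i).val / q < k := fun t i =>
    Nat.div_lt_of_lt_mul ((ZMod.val_lt _).trans_le hq.1)
  let box : Fin (k ^ Fintype.card ι + 1) → ι → Fin k := fun t i => ⟨_, hbox t i⟩
  obtain ⟨t₁, t₂, hne, heq⟩ := Fintype.exists_ne_map_eq_of_card_lt box (by simp)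
  wlog hlt : t₂ < t₁ generalizing t₁ t₂
  · exact this t₂ t₁ hne.symm heq.symm (lt_of_le_of_ne (not_lt.mp hlt) hne)
  refine ⟨t₁ - t₂, fun i => ((t₁ : ZMod p) * a i).val - ((t₂ : ZMod p) * a i).val,
    by omega, by have := t₁.is_lt; zify at this; omega, fun i => ?_, fun i => by simp [sub_mul]⟩
  have hq₀ : 0 < q := Nat.pos_of_mul_pos_right ((NeZero.pos p).trans_le hq.1)
  have hdiff := Nat.abs_sub_lt_of_div_eq_div hq₀ (congrArg Fin.val (congrFun heq i))
  dsimp only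
  calc (k : ℤ) * |_| ≤ k * ((q - 1 : ℕ) : ℤ) := by gcongr; omega
    _ < p := by exact_mod_cast hq.2

theorem Rat.not_dvd_den_intCast_div {p : ℕ} {r Λ : ℤ} (hΛ : ¬(p : ℤ) ∣ Λ) :
    ¬p ∣ ((r : ℚ) / Λ).den := fun h =>
  hΛ ((Int.natCast_dvd_natCast.mpr h).trans (by simpa [Rat.divInt_eq_div] using Rat.den_dvd r Λ))

theorem Rat.num_intCast_div_eq_mul_den {p : ℕ} [Fact p.Prime] {r Λ : ℤ} {a : ZMod p}
    (hΛ : (Λ : ZMod p) ≠ 0) (hr : (r : ZMod p) = Λ * a) :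
    (((r : ℚ) / Λ).num : ZMod p) = a * ((r : ℚ) / Λ).den := by
  set x := (r : ℚ) / Λ
  have hΛ₀ : (Λ : ℚ) ≠ 0 := by rintro h; simp [Int.cast_eq_zero.mp h] at hΛ
  have hx : x.num * Λ = r * x.den := by
    have : (x.num : ℚ) * Λ = r * x.den := by
      rw [← Rat.mul_den_eq_num, mul_right_comm, div_mul_cancel₀ _ hΛ₀]
    exact_mod_cast this
  apply mul_right_cancel₀ hΛ
  have := congrArg (fun z : ℤ => (z : ZMod p)) hx
  push_cast at this
  rw [this, hr]
  ring

theorem aeval_eq_zero_iff_aeval_zmod_eq_zero {p k n : ℕ} [Fact p.Prime]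
    {f : MvPolynomial (Fin n) ℤ} (hf : f.totalDegree ≤ 1) (hfk : l1Norm f ≤ k) (hk : 0 < k)
    {Λ : ℤ} {r : Fin n → ℤ}
    (hΛ : k * |Λ| < p) (hr : ∀ i, k * |r i| < p) (hΛp : (Λ : ZMod p) ≠ 0)
    {a : Fin n → ZMod p} {b : Fin n → ℚ} (ha : ∀ i, (r i : ZMod p) = Λ * a i)
    (hb : ∀ i, (r i : ℚ) = Λ * b i) :
    aeval b f = 0 ↔ aeval a f = 0 := by
  set N := f.coeff 0 * Λ + ∑ i, f.coeff (Finsupp.single i 1) * r i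
  have hcast : ∀ {S : Type} [CommRing S] (x : Fin n → S), (∀ i, (r i : S) = Λ * x i) →
      (N : S) = Λ * aeval x f := by
    intro S _ x hx
    simp only [N, aeval_eq_of_totalDegree_le_one hf, algebraMap_int_eq, eq_intCast, mul_add,
      mul_sum, Int.cast_add, Int.cast_mul, Int.cast_sum, hx]
    ring_nf
  have hN : |N| < p := by
    refine Int.abs_mul_add_sum_mul_lt univ (by exact_mod_cast hk) hΛ (fun i _ => hr i) ?_
    rw [l1Norm_eq_of_totalDegree_le_one hf] at hfk
    simpa [Int.natCast_natAbs] using (Nat.cast_le (α := ℤ)).mpr hfk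
  have hΛ₀ : (Λ : ℚ) ≠ 0 := by rintro h; simp [Int.cast_eq_zero.mp h] at hΛp
  calc aeval b f = 0 ↔ (N : ℚ) = 0 := by rw [hcast b hb, mul_eq_zero, or_iff_right hΛ₀]
    _ ↔ (N : ZMod p) = 0 := by
      rw [Int.cast_eq_zero, ZMod.intCast_zmod_eq_zero_iff_dvd]
      exact ⟨fun h => h ▸ dvd_zero _, fun h => Int.eq_zero_of_abs_lt_dvd h hN⟩
    _ ↔ aeval a f = 0 := by rw [hcast a ha, mul_eq_zero, or_iff_right hΛp]

theorem rectify_linear_general {p : ℕ} (hp : p.Prime) (k : ℕ) (hk : 1 < k) (n : ℕ)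
    (a : Fin n → ZMod p)
    (L₁ L₂ : Set (MvPolynomial (Fin n) ℤ))
    (hL₁deg : ∀ f ∈ L₁, f.totalDegree ≤ 1) (hL₁norm : ∀ f ∈ L₁, l1Norm f ≤ k)
    (hL₂deg : ∀ f ∈ L₂, f.totalDegree ≤ 1) (hL₂norm : ∀ f ∈ L₂, l1Norm f ≤ k)
    (hL₁ : ∀ f ∈ L₁, MvPolynomial.aeval a f = 0)
    (hL₂ : ∀ f ∈ L₂, MvPolynomial.aeval a f ≠ 0)
    (hsize : (n : ℝ) < Real.logb k p - 1) :
    ∃ b : Fin n → ℚ,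
      (∀ i, ¬ (p : ℕ) ∣ (b i).den) ∧
      (∀ i, ((b i).num : ZMod p) = a i * ((b i).den : ZMod p)) ∧
      (∀ f ∈ L₁, MvPolynomial.aeval b f = 0) ∧
      (∀ f ∈ L₂, MvPolynomial.aeval b f ≠ 0) := by
  have := Fact.mk hp
  have hkp : k ^ (n + 1) < p := by
    have hpow := (Real.lt_logb_iff_rpow_lt (by exact_mod_cast hk) (by exact_mod_cast hp.pos)).mp
      (show ((n + 1 : ℕ) : ℝ) < Real.logb k p by push_cast; linarith)
    exact_mod_cast (Real.rpow_natCast (k : ℝ) (n + 1)) ▸ hpow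
  obtain ⟨Λ, r, hΛ₀, hΛle, hr, hra⟩ := ZMod.exists_pos_le_pow_small_residues (by omega : 0 < k) a
  rw [Fintype.card_fin] at hΛle
  have hkΛ : (k : ℤ) * Λ < p :=
    calc (k : ℤ) * Λ ≤ k * k ^ n := by gcongr
      _ < p := by rw [← pow_succ']; exact_mod_cast hkp
  have hΛp : ¬(p : ℤ) ∣ Λ := fun h => by
    nlinarith [Int.le_of_dvd hΛ₀ h, (by exact_mod_cast hk : (1 : ℤ) < k)]
  have hΛZ : (Λ : ZMod p) ≠ 0 := by rwa [Ne, ZMod.intCast_zmod_eq_zero_iff_dvd]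
  have hb : ∀ i, (r i : ℚ) = Λ * (r i / Λ) := fun i =>
    (mul_div_cancel₀ _ (by exact_mod_cast hΛ₀.ne')).symm
  have key := fun f hf hfk => aeval_eq_zero_iff_aeval_zmod_eq_zero (f := f) hf hfk (by omega)
    (by rwa [abs_of_pos hΛ₀]) hr hΛZ hra hb
  exact ⟨fun i => r i / Λ, fun i => Rat.not_dvd_den_intCast_div hΛp,
    fun i => Rat.num_intCast_div_eq_mul_den hΛZ (hra i),
    fun f hf => (key f (hL₁deg f hf) (hL₁norm f hf)).2 (hL₁ f hf),
    fun f hf => (key f (hL₂deg f hf) (hL₂norm f hf)).not.2 (hL₂ f hf)⟩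

/-- Let `p` be a prime, `k > 1`, and `A = {a 1, …, a n} ⊆ ℤ/pℤ`.  Let `L₁, L₂` be
collections of linear polynomials in `ℤ[x₁,…,xₙ]` of ℓ1-norm at most `k` (constant term
included) such that those in `L₁` vanish at `a` and those in `L₂` do not.  If
`n < log_k p − 1` then there are `b i ∈ ℤ_{(p)}` (rationals with denominator prime to `p`,
realized here inside `ℚ`) mapped to `a i` by the canonical homomorphism `ℤ_{(p)} → ℤ/pℤ`,
with all polynomials of `L₁` vanishing at `b` and none of `L₂` vanishing at `b`. -/
theorem rectify_linear {p : ℕ} (hp : p.Prime) (k : ℕ) (hk : 1 < k) (n : ℕ)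
    (a : Fin n → ZMod p) (ha : Function.Injective a)
    (L₁ L₂ : Set (MvPolynomial (Fin n) ℤ))
    (hL₁deg : ∀ f ∈ L₁, f.totalDegree ≤ 1) (hL₁norm : ∀ f ∈ L₁, l1Norm f ≤ k)
    (hL₂deg : ∀ f ∈ L₂, f.totalDegree ≤ 1) (hL₂norm : ∀ f ∈ L₂, l1Norm f ≤ k)
    (hL₁ : ∀ f ∈ L₁, MvPolynomial.aeval a f = 0)
    (hL₂ : ∀ f ∈ L₂, MvPolynomial.aeval a f ≠ 0)
    (hsize : (n : ℝ) < Real.logb k p - 1) :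
    ∃ b : Fin n → ℚ,
      (∀ i, ¬ (p : ℕ) ∣ (b i).den) ∧
      (∀ i, ((b i).num : ZMod p) = a i * ((b i).den : ZMod p)) ∧
      (∀ f ∈ L₁, MvPolynomial.aeval b f = 0) ∧
      (∀ f ∈ L₂, MvPolynomial.aeval b f ≠ 0) :=
  rectify_linear_general hp k hk n a L₁ L₂ hL₁deg hL₁norm hL₂deg hL₂norm hL₁ hL₂ hsize
end

section
/- Let k ≥ 1 be an integer and p a prime. For any A ⊆ Z/pZ with |A| < log_{2k}(p) − 1, there exists a set A' ⊂ Z of the same cardinality such that the canonical homomorphism Z → Z/pZ restricts to a bijection from A' onto A which is a Freiman isomorphism of order k: for any a_1,...,a_{2k} ∈ A', a_1+...+a_k = a_{k+1}+...+a_{2k} in Z if and only if the corresponding identity holds for their images in Z/pZ. -/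
/-!
Pigeonholing the `p` dilates `l • A` according to which of `2k` equal arcs of `ℤ/pℤ` each
`l * a` lies in, two dilates `l₁ ≠ l₂` fall into the same arcs for every `a ∈ A`, because
`(2k) ^ |A| < p`. For `c = l₁ - l₂ ≠ 0` every `c * a` then has a representative of absolute value
less than `p / 2k`. Sums of `k` such representatives minus sums of `k` others cannot wrap around
modulo `p`, so taking representatives is a Freiman isomorphism of order `k` on `c • A`; undoing
the dilation by multiplying with a lift of `c⁻¹` in `ℤ` gives the set `A'`.
-/

open Finset

lemma Nat.mul_abs_sub_lt_of_mul_div_eq {m n u v : ℕ} (hn : 0 < n) (h : m * u / n = m * v / n) :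
    (m : ℤ) * |(u : ℤ) - v| < n := by
  have hu₁ := Nat.div_mul_le_self (m * u) n
  have hu₂ := Nat.lt_div_mul_add (a := m * u) hn
  have hv₁ := Nat.div_mul_le_self (m * v) n
  have hv₂ := Nat.lt_div_mul_add (a := m * v) hn
  rw [h] at hu₁ hu₂
  have : |((m * u : ℕ) : ℤ) - (m * v : ℕ)| < n := by
    rw [abs_sub_lt_iff]
    omega
  rwa [Nat.cast_mul, Nat.cast_mul, ← mul_sub, abs_mul, Nat.abs_cast] at this

lemma Nat.pow_lt_of_lt_logb {b n x : ℕ} (hb : 1 < b) (h : (n : ℝ) < Real.logb b x) :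
    b ^ n < x := by
  rcases Nat.eq_zero_or_pos x with rfl | hx
  · simp only [CharP.cast_eq_zero, Real.logb_zero] at h
    exact absurd h (not_lt.2 n.cast_nonneg)
  rw [Real.lt_logb_iff_rpow_lt (by exact_mod_cast hb) (by exact_mod_cast hx),
    Real.rpow_natCast] at h
  exact_mod_cast h

lemma isAddFreimanIso_image_of_injective {F α β : Type*} [AddCommMonoid α] [AddCommMonoid β]
    [FunLike F α β] [AddMonoidHomClass F α β] {f : F} (hf : Function.Injective f) (k : ℕ)
    (A : Set α) : IsAddFreimanIso k A (f '' A) f where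
  bijOn := hf.injOn.bijOn_image
  map_sum_eq_map_sum s t _ _ _ _ := by rw [← map_multiset_sum, ← map_multiset_sum, hf.eq_iff]

lemma IsAddFreimanIso.sum_eq_sum_iff {α β : Type*} [AddCommMonoid α] [AddCommMonoid β] {k : ℕ}
    {A : Set α} {B : Set β} {f : α → β} (hf : IsAddFreimanIso k A B f) {x y : Fin k → α}
    (hx : ∀ i, x i ∈ A) (hy : ∀ i, y i ∈ A) :
    ∑ i, f (x i) = ∑ i, f (y i) ↔ ∑ i, x i = ∑ i, y i := by
  simpa only [Multiset.map_map, Function.comp_def, ← Finset.sum_eq_multiset_sum] using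
    hf.map_sum_eq_map_sum (s := univ.val.map x) (t := univ.val.map y) (by simpa using hx)
      (by simpa using hy) (by simp) (by simp)

lemma Multiset.two_mul_abs_sum_lt {n : ℕ} (hn : 0 < n) {s : Multiset ℤ}
    (hs : ∀ y ∈ s, 2 * s.card * |y| < n) :
    2 * |s.sum| < n := by
  rcases s.empty_or_exists_mem with rfl | ⟨y₀, hy₀⟩
  · simpa using hn
  have hcard : (0 : ℤ) < s.card := by exact_mod_cast Multiset.card_pos_iff_exists_mem.2 ⟨y₀, hy₀⟩
  have hbound : (s.map fun y ↦ (2 : ℤ) * s.card * |y|).sum ≤ (s.map fun _ ↦ (n : ℤ) - 1).sum :=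
    Multiset.sum_map_le_sum_map _ _ fun y hy ↦ by linarith [hs y hy]
  rw [Multiset.sum_map_mul_left, Multiset.map_const', Multiset.sum_replicate, nsmul_eq_mul]
    at hbound
  have := Multiset.abs_sum_le_sum_abs (s := s)
  nlinarith

namespace ZMod

variable {n : ℕ} [NeZero n]

lemma abs_valMinAbs_le_abs_of_intCast_eq {x : ZMod n} {y : ℤ} (h : (y : ZMod n) = x) :
    |x.valMinAbs| ≤ |y| := by
  obtain ⟨q, hq⟩ : (n : ℤ) ∣ y - x.valMinAbs := by
    rw [← intCast_zmod_eq_zero_iff_dvd, Int.cast_sub, coe_valMinAbs, h, sub_self]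
  obtain ⟨hv₁, hv₂⟩ := x.valMinAbs_mem_Ioc
  rcases eq_or_ne q 0 with rfl | hq₀
  · rw [show y = x.valMinAbs by linarith]
  · have hq₁ : 1 ≤ |q| := Int.one_le_abs hq₀
    have hnq : |(n : ℤ) * q| ≤ |y| + |x.valMinAbs| := by
      rw [← hq]; exact abs_sub _ _
    rw [abs_mul, Nat.abs_cast] at hnq
    have : 2 * |x.valMinAbs| ≤ n := by
      rcases abs_choice x.valMinAbs with h | h <;> rw [h] <;> linarith
    -- |y| ≥ n |q| - |v| ≥ n - |v| ≥ |v| for v = x.valMinAbs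
    nlinarith

lemma valMinAbs_intCast_of_two_mul_abs_lt {y : ℤ} (h : 2 * |y| < n) :
    (y : ZMod n).valMinAbs = y := by
  obtain ⟨h₁, h₂⟩ := abs_lt.1 (by rwa [abs_mul, abs_two] : |2 * y| < n)
  exact (valMinAbs_spec _ _).2 ⟨rfl, by linarith, by linarith⟩

lemma isAddFreimanIso_valMinAbs {k : ℕ} {C : Set (ZMod n)}
    (hC : ∀ x ∈ C, 2 * k * |x.valMinAbs| < n) :
    IsAddFreimanIso k C (valMinAbs '' C) valMinAbs where
  bijOn := injective_valMinAbs.injOn.bijOn_image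
  map_sum_eq_map_sum s t hsC htC hs ht := by
    have hsum {u : Multiset (ZMod n)} (huC : ∀ ⦃x⦄, x ∈ u → x ∈ C) (hu : u.card = k) :
        (u.map valMinAbs).sum = u.sum.valMinAbs := by
      rw [← valMinAbs_intCast_of_two_mul_abs_lt (n := n) (Multiset.two_mul_abs_sum_lt (NeZero.pos n) ?_)]
      · simp [Int.cast_multiset_sum, Multiset.map_map]
      · simpa [hu] using fun x hx ↦ hC x (huC hx)
    rw [hsum hsC hs, hsum htC ht, valMinAbs_inj]

lemma exists_ne_zero_forall_mul_abs_valMinAbs_lt {m : ℕ} (hm : 0 < m) (A : Finset (ZMod n))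
    (hA : m ^ #A < n) : ∃ c : ZMod n, c ≠ 0 ∧ ∀ a ∈ A, m * |(c * a).valMinAbs| < n := by
  let arc : ZMod n → A → Fin m := fun l a ↦
    ⟨m * (l * a).val / n, Nat.div_lt_of_lt_mul (by rw [mul_comm n]; gcongr; exact val_lt _)⟩
  obtain ⟨l₁, l₂, hne, harc⟩ := Fintype.exists_ne_map_eq_of_card_lt arc (by simpa using hA)
  refine ⟨l₁ - l₂, sub_ne_zero.2 hne, fun a ha ↦ ?_⟩
  calc (m : ℤ) * |((l₁ - l₂) * a).valMinAbs|
      ≤ m * |((l₁ * a).val : ℤ) - (l₂ * a).val| := by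
        refine mul_le_mul_of_nonneg_left (abs_valMinAbs_le_abs_of_intCast_eq ?_) m.cast_nonneg
        push_cast [natCast_val, cast_id]
        ring
    _ < n := Nat.mul_abs_sub_lt_of_mul_div_eq (NeZero.pos n) congr(Fin.val $(congrFun harc ⟨a, ha⟩))

end ZMod

theorem ZMod.exists_isAddFreimanIso_intCast {p k : ℕ} [Fact p.Prime] (hk : 0 < k)
    (A : Finset (ZMod p)) (hA : (2 * k) ^ #A < p) :
    ∃ A' : Finset ℤ, IsAddFreimanIso k (A' : Set ℤ) (A : Set (ZMod p)) Int.cast := by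
  obtain ⟨c, hc, hsmall⟩ := exists_ne_zero_forall_mul_abs_valMinAbs_lt (by omega) A hA
  set μ : ℤ := c⁻¹.valMinAbs
  have hμ : (μ : ZMod p) = c⁻¹ := coe_valMinAbs _
  have hμ₀ : μ ≠ 0 := fun h ↦ hc (inv_eq_zero.1 (by rw [← hμ, h, Int.cast_zero]))
  let r : ZMod p → ℤ := fun a ↦ μ * (c * a).valMinAbs
  have hr : ∀ a, (r a : ZMod p) = a := fun a ↦ by
    simp [r, hμ, inv_mul_cancel_left₀ hc]
  have hiso : IsAddFreimanIso k A (r '' A) r := by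
    have hdil := isAddFreimanIso_image_of_injective (f := AddMonoidHom.mulLeft c)
      (mul_right_injective₀ hc) k A
    have hrep := isAddFreimanIso_valMinAbs (k := k) (C := (c * ·) '' A) <| by
      rintro _ ⟨a, ha, rfl⟩
      exact_mod_cast hsmall a ha
    have hscale := isAddFreimanIso_image_of_injective (f := AddMonoidHom.mulLeft μ)
      (mul_right_injective₀ hμ₀) k (valMinAbs '' ((c * ·) '' A))
    simpa [r, Set.image_image, Function.comp_def] using hscale.comp (hrep.comp hdil)
  refine ⟨A.image r, ?_⟩
  rw [coe_image]
  refine hiso.symm ?_ ?_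
  · rintro _ ⟨a, ha, rfl⟩
    rwa [hr]
  · rintro _ ⟨a, -, rfl⟩
    rw [hr]

/-- Let `k ≥ 1` and `p` prime.  Any `A ⊆ ℤ/pℤ` with `|A| < log_{2k} p − 1` is the image,
under the canonical homomorphism `ℤ → ℤ/pℤ`, of a set `A' ⊂ ℤ` of the same cardinality,
and this bijection is a Freiman isomorphism of order `k`: a `k`-term sum equality
`a₁ + ⋯ + a_k = a_{k+1} + ⋯ + a_{2k}` holds in `ℤ` iff it holds for the images in
`ℤ/pℤ`. -/
theorem rectification_zmod {p : ℕ} (hp : p.Prime) (k : ℕ) (hk : 1 ≤ k)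
    (A : Finset (ZMod p)) (hsize : (A.card : ℝ) < Real.logb (2 * k) p - 1) :
    ∃ A' : Finset ℤ,
      A'.card = A.card ∧
      A'.image (Int.cast : ℤ → ZMod p) = A ∧
      (∀ x y : Fin k → ℤ, (∀ i, x i ∈ A') → (∀ i, y i ∈ A') →
        ((∑ i, x i = ∑ i, y i) ↔
          (∑ i, ((x i : ZMod p)) = ∑ i, ((y i : ZMod p))))) := by
  have : Fact p.Prime := ⟨hp⟩
  have hpow : (2 * k) ^ #A < p :=
    Nat.pow_lt_of_lt_logb (by omega) (by push_cast; linarith)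
  obtain ⟨A', hA'⟩ := ZMod.exists_isAddFreimanIso_intCast hk A hpow
  have himage : A'.image Int.cast = A := by exact_mod_cast hA'.bijOn.image_eq
  refine ⟨A', ?_, himage, fun x y hx hy ↦ (hA'.sum_eq_sum_iff hx hy).symm⟩
  rw [← himage, card_image_of_injOn hA'.bijOn.injOn]
end

section
/- For every integer k ≥ 3 and every prime p ≥ 2^{32(k−1)^2 (log_2(16(k−1)))^2}, there exists a subset A ⊆ F_p with |A| ≤ (10/(k−1)) · log_2(p)/log_2 log_2(p) such that A is not Freiman ring-isomorphic of order k to any subset of a characteristic zero integral domain. -/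
/-!
Put `ℓ = ⌊log₂ p⌋`, `q = k - 1`, `B = 2 ^ c` with `c ≈ log₂ ℓ - log₂ q - log₂ log₂ ℓ`, and
`D = B ^ (q - 1)`. The set consists of `1, 2, …, B`, the powers `B ^ t` for `t < q`, and the
truncations `⌊p / D ^ i⌋` of `p`. Listed in this order, every element after `1` is a sum of at
most `q` products of earlier ones: `x + 1 = x * 1 + 1 * 1`, `B ^ (t + 1) = B ^ t * B`, and the
Horner step `⌊p / D ^ i⌋ = ⌊p / D ^ (i + 1)⌋ * D + ∑ₜ dₜ * B ^ t` over the base-`B` digits `dₜ`.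
Each such relation is the vanishing of `X_x - ∑ X_y X_z`, of degree `2` and ℓ1-norm at most `k`.
If these relations and `X_1 - 1 = 0` transfer to a ring, then by induction every element
is sent to the same integer, so `X_p`, which vanishes on `F_p`, would vanish at `p ≠ 0`.
The set has `B + q + O(ℓ / (c q))` elements, which the choice of `c` makes `O(ℓ / (q log ℓ))`.
-/

open MvPolynomial Finset

universe u

section L1Norm

variable {n : ℕ}

lemma l1Norm_eq_sum_of_support_subset (f : MvPolynomial (Fin n) ℤ) {s : Finset (Fin n →₀ ℕ)}
    (hs : f.support ⊆ s) : l1Norm f = ∑ m ∈ s, (f.coeff m).natAbs :=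
  sum_subset hs fun m _ hm => by simp [notMem_support_iff.mp hm]

lemma l1Norm_add_le (f g : MvPolynomial (Fin n) ℤ) : l1Norm (f + g) ≤ l1Norm f + l1Norm g := by
  rw [l1Norm_eq_sum_of_support_subset (f + g) support_add,
    l1Norm_eq_sum_of_support_subset f subset_union_left,
    l1Norm_eq_sum_of_support_subset g subset_union_right, ← sum_add_distrib]
  exact sum_le_sum fun m _ => by simpa only [coeff_add] using Int.natAbs_add_le _ _

lemma l1Norm_neg (f : MvPolynomial (Fin n) ℤ) : l1Norm (-f) = l1Norm f := by
  simp [l1Norm, support_neg]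

lemma l1Norm_sub_le (f g : MvPolynomial (Fin n) ℤ) : l1Norm (f - g) ≤ l1Norm f + l1Norm g := by
  simpa [sub_eq_add_neg, l1Norm_neg] using l1Norm_add_le f (-g)

lemma l1Norm_monomial (m : Fin n →₀ ℕ) (c : ℤ) : l1Norm (monomial m c) = c.natAbs := by
  classical
  rcases eq_or_ne c 0 with rfl | hc
  · simp [l1Norm]
  · simp [l1Norm, support_monomial, hc]

lemma l1Norm_X (i : Fin n) : l1Norm (X i : MvPolynomial (Fin n) ℤ) = 1 :=
  l1Norm_monomial _ 1

lemma l1Norm_X_mul_X (i j : Fin n) : l1Norm (X i * X j : MvPolynomial (Fin n) ℤ) = 1 := by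
  rw [X, X, monomial_mul, one_mul, l1Norm_monomial, Int.natAbs_one]

lemma l1Norm_one : l1Norm (1 : MvPolynomial (Fin n) ℤ) = 1 :=
  l1Norm_monomial 0 1

end L1Norm

inductive IsSumOfProducts (S : Set ℕ) : ℕ → ℕ → Prop
  | zero (q : ℕ) : IsSumOfProducts S q 0
  | add_mul {q x y z : ℕ} : IsSumOfProducts S q x → y ∈ S → z ∈ S →
      IsSumOfProducts S (q + 1) (x + y * z)

namespace IsSumOfProducts

variable {S : Set ℕ}

lemma mono {q q' x : ℕ} (h : IsSumOfProducts S q x) (hq : q ≤ q') : IsSumOfProducts S q' x := by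
  induction h generalizing q' with
  | zero => exact zero q'
  | add_mul _ hy hz ih =>
    obtain ⟨q', rfl⟩ := Nat.exists_eq_add_of_le' (Nat.one_le_of_lt hq)
    exact (ih (by omega)).add_mul hy hz

lemma of_lt_pow {B s N : ℕ} (hN : N < B ^ s) (hdigit : ∀ d, 0 < d → d < B → d ∈ S)
    (hpow : ∀ t < s, B ^ t ∈ S) : IsSumOfProducts S s N := by
  induction s generalizing N with
  | zero => simpa [Nat.lt_one_iff.mp (by simpa using hN)] using zero 0
  | succ s ih =>
    have hBs : 0 < B ^ s := Nat.pos_of_ne_zero fun h => by simp_all [pow_succ]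
    have hlow := ih (Nat.mod_lt N hBs) fun t ht => hpow t (by omega)
    have hd : N / B ^ s < B := Nat.div_lt_of_lt_mul (by rwa [← pow_succ])
    rw [← Nat.mod_add_div' N (B ^ s)]
    rcases Nat.eq_zero_or_pos (N / B ^ s) with h0 | hpos
    · simpa [h0] using hlow.mono (Nat.le_succ s)
    · exact hlow.add_mul (hdigit _ hpos hd) (hpow s s.lt_succ_self)

lemma exists_mvPolynomial {q x : ℕ} (h : IsSumOfProducts S q x) {n : ℕ} (σ : ℕ → Fin n) :
    ∃ g : MvPolynomial (Fin n) ℤ, g.totalDegree ≤ 2 ∧ l1Norm g ≤ q ∧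
      ∀ {R : Type u} [CommRing R] (c : Fin n → R), (∀ y ∈ S, c (σ y) = y) → aeval c g = x := by
  induction h with
  | zero q => exact ⟨0, by simp, by simp [l1Norm], fun _ _ => by simp⟩
  | @add_mul q x y z _ hy hz ih =>
    obtain ⟨g, hdeg, hl1, heval⟩ := ih
    refine ⟨g + X (σ y) * X (σ z), ?_, ?_, fun c hc => ?_⟩
    · refine (totalDegree_add _ _).trans (max_le hdeg ?_)
      exact (totalDegree_mul _ _).trans (by simp [totalDegree_X])
    · exact (l1Norm_add_le _ _).trans (by rw [l1Norm_X_mul_X]; omega)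
    · simp [heval c hc, hc y hy, hc z hz]

end IsSumOfProducts

inductive IsSumProdChain (q : ℕ) : Finset ℕ → Prop
  | one : IsSumProdChain q {1}
  | extend {S : Finset ℕ} {x : ℕ} : IsSumProdChain q S → IsSumOfProducts S q x →
      IsSumProdChain q (insert x S)

namespace IsSumProdChain

variable {q : ℕ} {S : Finset ℕ}

lemma one_mem (hS : IsSumProdChain q S) : 1 ∈ S := by
  induction hS with
  | one => exact mem_singleton_self 1
  | extend _ _ ih => exact mem_insert_of_mem ih

lemma insert_mul (hS : IsSumProdChain q S) (hq : 1 ≤ q) {y z : ℕ} (hy : y ∈ S) (hz : z ∈ S) :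
    IsSumProdChain q (insert (y * z) S) :=
  hS.extend <| by simpa using ((IsSumOfProducts.zero 0).add_mul hy hz).mono hq

lemma forall_eval_eq (hS : IsSumProdChain q S) (hq : 1 ≤ q) {R R' : Type u} [CommRing R]
    [CommRing R'] {n : ℕ} (a : Fin n → R) (b : Fin n → R') (σ : ℕ → Fin n)
    (ha : ∀ x ∈ S, a (σ x) = x)
    (hab : ∀ f : MvPolynomial (Fin n) ℤ, f.totalDegree ≤ 2 → l1Norm f ≤ q + 1 →
      aeval a f = 0 → aeval b f = 0) :
    ∀ x ∈ S, b (σ x) = x := by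
  induction hS with
  | one =>
    have h := hab (X (σ 1) - 1)
      ((totalDegree_sub _ _).trans (by simp [totalDegree_X]))
      ((l1Norm_sub_le _ _).trans (by rw [l1Norm_X, l1Norm_one]; omega))
      (by simp [ha 1 (mem_singleton_self 1)])
    simpa [sub_eq_zero] using h
  | @extend S x _ hx ih =>
    have ih := ih fun y hy => ha y (mem_insert_of_mem hy)
    obtain ⟨g, hdeg, hl1, heval⟩ := hx.exists_mvPolynomial.{u} σ
    have h := hab (X (σ x) - g)
      ((totalDegree_sub _ _).trans (max_le (by simp [totalDegree_X]) hdeg))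
      ((l1Norm_sub_le _ _).trans (by rw [l1Norm_X]; omega))
      (by simp [ha x (mem_insert_self x S),
        heval a fun y hy => ha y (mem_insert_of_mem hy)])
    intro y hy
    rcases mem_insert.mp hy with rfl | hy
    · simpa [sub_eq_zero, heval b ih] using h
    · exact ih y hy

lemma exists_not_iff (hS : IsSumProdChain q S) (hq : 1 ≤ q) {R R' : Type u} [CommRing R]
    [CommRing R'] {x : ℕ} (hx : x ∈ S) (hR : (x : R) = 0) (hR' : (x : R') ≠ 0) {n : ℕ}
    (a : Fin n → R) (b : Fin n → R') (ha : ∀ y ∈ S, (y : R) ∈ Set.range a) :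
    ∃ f : MvPolynomial (Fin n) ℤ, f.totalDegree ≤ 2 ∧ l1Norm f ≤ q + 1 ∧
      ¬ (aeval a f = 0 ↔ aeval b f = 0) := by
  obtain ⟨i, -⟩ := ha 1 hS.one_mem
  have : Nonempty (Fin n) := ⟨i⟩
  set σ : ℕ → Fin n := fun y => Function.invFun a (y : R)
  have hσ : ∀ y ∈ S, a (σ y) = y := fun y hy => Function.invFun_eq (ha y hy)
  by_contra! hab
  have hb := hS.forall_eval_eq hq a b σ hσ fun f hdeg hl1 => (hab f hdeg hl1).mp
  have h0 : aeval b (X (σ x) : MvPolynomial (Fin n) ℤ) = 0 :=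
    (hab _ (by simp [totalDegree_X]) (by rw [l1Norm_X]; omega)).mp (by simp [hσ x hx, hR])
  exact hR' (by simpa [hb x hx] using h0)

end IsSumProdChain

lemma isSumProdChain_Icc_one (q : ℕ) (hq : 2 ≤ q) {B : ℕ} (hB : 1 ≤ B) :
    IsSumProdChain q (Icc 1 B) := by
  induction B, hB using Nat.le_induction with
  | base => exact .one
  | succ B hB ih =>
    rw [← insert_Icc_right_eq_Icc_add_one (by omega)]
    refine ih.extend ?_
    have hone : 1 ∈ (Icc 1 B : Set ℕ) := by simp [hB]
    have hBmem : B ∈ (Icc 1 B : Set ℕ) := by simp [hB]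
    simpa using (((IsSumOfProducts.zero 0).add_mul hBmem hone).add_mul hone hone).mono hq

namespace IsSumProdChain

variable {S : Finset ℕ}

lemma union_image_pow {q : ℕ} (hS : IsSumProdChain q S) (hq : 1 ≤ q) {B : ℕ} (hB : B ∈ S)
    (j : ℕ) : IsSumProdChain q (S ∪ (range j).image (B ^ ·)) := by
  induction j with
  | zero => simpa using hS
  | succ j ih =>
    rw [range_add_one, image_insert, union_insert]
    rcases j with _ | j
    · simpa [hS.one_mem] using ih
    · simpa [pow_succ] using ih.insert_mul hq (y := B ^ j) (z := B)
        (mem_union_right _ (mem_image_of_mem _ (mem_range.mpr j.lt_succ_self)))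
        (mem_union_left _ hB)

lemma union_image_div_pow {s : ℕ} (hS : IsSumProdChain (s + 1) S) {B : ℕ}
    (hdigit : ∀ d, 0 < d → d < B → d ∈ S) (hpow : ∀ t ≤ s, B ^ t ∈ S) {m N : ℕ}
    (hN : N < (B ^ s) ^ m) :
    IsSumProdChain (s + 1) (S ∪ (range m).image fun i => N / (B ^ s) ^ i) := by
  induction m generalizing N with
  | zero => simpa using hS
  | succ m ih =>
    set D := B ^ s
    have hD : 0 < D := Nat.pos_of_ne_zero fun h => by simp [h] at hN
    have hN' : N / D < D ^ m := Nat.div_lt_of_lt_mul (by rwa [← pow_succ'])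
    have himage : (range (m + 1)).image (fun i => N / D ^ i)
        = insert N ((range m).image fun i => N / D / D ^ i) := by
      rw [range_add_one', image_insert, map_eq_image, image_image, pow_zero, Nat.div_one]
      congr 1
      exact image_congr fun i _ => by rw [Nat.div_div_eq_div_mul, ← pow_succ']; rfl
    rw [himage, union_insert]
    refine (ih hN').extend ?_
    have hdigits : IsSumOfProducts (S ∪ (range m).image fun i => N / D / D ^ i : Finset ℕ) s
        (N % D) :=
      .of_lt_pow (Nat.mod_lt N hD) (fun d h0 h1 => by simp [hdigit d h0 h1])
        fun t ht => by simp [hpow t ht.le]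
    rcases m with _ | m
    · -- `N < D`: there is no carry, only the digits of `N`
      have hND : N % D = N := Nat.mod_eq_of_lt (by simpa using hN)
      simpa only [hND] using hdigits.mono s.le_succ
    · simpa only [Nat.mod_add_div'] using
        hdigits.add_mul (y := N / D) (z := D)
          (mem_union_right _ (mem_image.mpr ⟨0, by simp, by simp⟩))
          (mem_union_left _ (hpow s le_rfl))

end IsSumProdChain

lemma exists_isSumProdChain_mem {s c m N : ℕ} (hs : 1 ≤ s) (hN0 : 0 < N)
    (hN : N < 2 ^ (c * s * m)) :
    ∃ S : Finset ℕ, IsSumProdChain (s + 1) S ∧ N ∈ S ∧ S.card ≤ 2 ^ c + (s + 1) + m := by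
  set B := 2 ^ c
  have hB : 1 ≤ B := Nat.one_le_two_pow
  have hm : m ≠ 0 := by rintro rfl; simp at hN; omega
  have hT := (isSumProdChain_Icc_one (s + 1) (by omega) hB).union_image_pow (by omega)
    (B := B) (by simp [hB]) (s + 1)
  refine ⟨_, hT.union_image_div_pow (B := B) (N := N) (m := m)
    (fun d h0 h1 => mem_union_left _ (mem_Icc.mpr ⟨h0, h1.le⟩))
    (fun t ht => mem_union_right _ (mem_image_of_mem _ (by simpa [Nat.lt_succ_iff] using ht)))
    (by rwa [← pow_mul, ← pow_mul, ← mul_assoc]), ?_, ?_⟩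
  · exact mem_union_right _ (mem_image.mpr ⟨0, by simp [Nat.pos_of_ne_zero hm], by simp⟩)
  · calc _ ≤ (Icc 1 B).card + ((range (s + 1)).image (B ^ ·)).card
          + ((range m).image fun i => N / (B ^ s) ^ i).card :=
          (card_union_le _ _).trans (Nat.add_le_add_right (card_union_le _ _) _)
      _ ≤ B + (s + 1) + m := by gcongr <;> simp [card_image_le.trans]

lemma five_mul_le_two_pow_add (m : ℕ) : 5 * m ≤ 2 ^ m + 15 := by
  induction m with
  | zero => simp
  | succ m ih =>
    rcases lt_or_ge m 3 with hm | hm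
    · interval_cases m <;> simp
    · have : 2 ^ 3 ≤ 2 ^ m := Nat.pow_le_pow_right two_pos hm
      rw [pow_succ]
      omega

lemma sq_mul_log_add_one_le {q ℓ : ℕ} (hℓ : 32 * q ^ 2 * (Nat.log 2 q + 4) ^ 2 ≤ ℓ) :
    q ^ 2 * (Nat.log 2 ℓ + 1) ≤ 2 * ℓ := by
  set z := Nat.log 2 q
  set lam := Nat.log 2 ℓ
  rcases le_or_gt (lam + 1) (4 * z + 4) with hsmall | hlarge
  · calc q ^ 2 * (lam + 1) ≤ q ^ 2 * (32 * (z + 4) ^ 2) := by gcongr; nlinarith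
      _ ≤ 2 * ℓ := by linarith
  · obtain ⟨t, ht⟩ : ∃ t, lam + 1 = 2 * z + 2 + (t + 1) := ⟨lam - 2 * z - 2, by omega⟩
    have hℓ0 : ℓ ≠ 0 := by rintro rfl; simp [lam] at hlarge
    have hlam : lam + 1 ≤ 2 ^ (t + 1) := by
      have := Nat.lt_two_pow_self (n := t)
      rw [pow_succ]
      omega
    calc q ^ 2 * (lam + 1) ≤ (2 ^ (z + 1)) ^ 2 * 2 ^ (t + 1) := by
          gcongr
          exact (Nat.lt_pow_succ_log_self one_lt_two q).le
      _ = 2 * 2 ^ lam := by rw [← pow_mul, ← pow_add, ← pow_succ']; congr 1; omega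
      _ ≤ 2 * ℓ := by gcongr; exact Nat.pow_log_le_self 2 hℓ0

lemma exists_digit_params {s ℓ : ℕ} (hs : 1 ≤ s)
    (hℓ : 32 * (s + 1) ^ 2 * (Nat.log 2 (s + 1) + 4) ^ 2 ≤ ℓ) :
    ∃ c m : ℕ, ℓ < c * s * m ∧ (s + 1) * (Nat.log 2 ℓ + 1) * (2 ^ c + (s + 1) + m) ≤ 10 * ℓ := by
  set z := Nat.log 2 (s + 1)
  set lam := Nat.log 2 ℓ
  set G := Nat.log 2 (lam + 1)
  have hz : 2 ^ z ≤ s + 1 := Nat.pow_log_le_self 2 (by omega)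
  have hℓ9 : 2 ^ (2 * z + 9) ≤ ℓ := calc
    2 ^ (2 * z + 9) = 32 * (2 ^ z) ^ 2 * 4 ^ 2 := by ring
    _ ≤ 32 * (s + 1) ^ 2 * (z + 4) ^ 2 := by gcongr; omega
    _ ≤ ℓ := hℓ
  have hlam : 2 * z + 9 ≤ lam := Nat.le_log_of_pow_le one_lt_two hℓ9
  have hG : 5 * G ≤ lam + 16 :=
    (five_mul_le_two_pow_add G).trans (by
      have : 2 ^ G ≤ lam + 1 := Nat.pow_log_le_self 2 (by omega)
      omega)
  -- the largest `c` with `2 ^ (z + 1) * 2 ^ (G + 1) * 2 ^ c ≤ 2 ^ (lam + 1)`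
  set c := lam - z - G - 1
  have hsq : (s + 1) ^ 2 * (lam + 1) ≤ 2 * ℓ := sq_mul_log_add_one_le hℓ
  have hℓ0 : ℓ ≠ 0 := by have := Nat.one_le_two_pow (n := 2 * z + 9); omega
  have htable : (s + 1) * (lam + 1) * 2 ^ c ≤ 2 * ℓ := calc
    _ ≤ 2 ^ (z + 1) * 2 ^ (G + 1) * 2 ^ c := by
        gcongr <;> exact (Nat.lt_pow_succ_log_self one_lt_two _).le
    _ = 2 * 2 ^ lam := by rw [← pow_add, ← pow_add, ← pow_succ']; congr 1; omega
    _ ≤ 2 * ℓ := by gcongr; exact Nat.pow_log_le_self 2 hℓ0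
  have hdigit : (s + 1) * (lam + 1) ≤ 5 * s * c := by
    rcases eq_or_lt_of_le hs with rfl | hs2
    · have hz1 : z = 1 := (by simpa using Nat.log_pow one_lt_two 1 : Nat.log 2 2 = 1)
      rcases le_or_gt lam 13 with hsmall | hlarge
      · have : G < 4 := Nat.log_lt_of_lt_pow (by omega) (by omega)
        omega
      · omega
    · have : 3 * (lam + 1) ≤ 10 * c := by omega
      nlinarith
  set m := ℓ / (c * s) + 1
  have hcs : 0 < c * s := Nat.mul_pos (by omega) (by omega)
  have hhorner : (s + 1) * (lam + 1) * m ≤ 6 * ℓ := calc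
    _ = (s + 1) * (lam + 1) * (ℓ / (c * s)) + (s + 1) * (lam + 1) := by ring
    _ ≤ 5 * (c * s * (ℓ / (c * s))) + ℓ := by
        refine add_le_add ((Nat.mul_le_mul_right _ hdigit).trans_eq (by ring)) ?_
        nlinarith
    _ ≤ 6 * ℓ := by linarith [Nat.mul_div_le ℓ (c * s)]
  exact ⟨c, m, Nat.lt_mul_div_succ ℓ hcs, by nlinarith⟩

lemma le_natLog_of_two_rpow_le {q p : ℕ} (hq : q ≠ 0)
    (h : (2 : ℝ) ^ (32 * (q : ℝ) ^ 2 * (Real.logb 2 (16 * q)) ^ 2) ≤ p) :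
    32 * q ^ 2 * (Nat.log 2 q + 4) ^ 2 ≤ Nat.log 2 p := by
  have hlog : (Nat.log 2 q + 4 : ℝ) ≤ Real.logb 2 (16 * q) := by
    have h16 : Real.logb 2 16 = 4 := by
      rw [show (16 : ℝ) = 2 ^ (4 : ℕ) by norm_num, Real.logb_pow,
        Real.logb_self_eq_one one_lt_two, mul_one, Nat.cast_ofNat]
    rw [Real.logb_mul (by norm_num) (by exact_mod_cast hq), h16, add_comm]
    exact_mod_cast add_le_add_right (Real.natLog_le_logb q 2) 4
  refine Nat.le_log_of_pow_le one_lt_two ?_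
  have hexp : ((32 * q ^ 2 * (Nat.log 2 q + 4) ^ 2 : ℕ) : ℝ)
      ≤ 32 * (q : ℝ) ^ 2 * (Real.logb 2 (16 * q)) ^ 2 := by
    push_cast
    gcongr
  exact_mod_cast (Real.rpow_natCast 2 _ ▸
    Real.rpow_le_rpow_of_exponent_le one_le_two hexp).trans h

lemma natCast_le_div_logb_logb {q p N : ℕ} (hq : 0 < q) (hℓ : 2 ≤ Nat.log 2 p)
    (hN : q * (Nat.log 2 (Nat.log 2 p) + 1) * N ≤ 10 * Nat.log 2 p) :
    (N : ℝ) ≤ 10 / q * (Real.logb 2 p / Real.logb 2 (Real.logb 2 p)) := by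
  set ℓ := Nat.log 2 p
  set lam := Nat.log 2 ℓ
  have hp : 0 < (p : ℝ) := by
    have : p ≠ 0 := by rintro rfl; simp [ℓ] at hℓ
    positivity
  have hℓ_le : (ℓ : ℝ) ≤ Real.logb 2 p := by exact_mod_cast Real.natLog_le_logb p 2
  have hℓR : (2 : ℝ) ≤ ℓ := by exact_mod_cast hℓ
  have hlog_lt : Real.logb 2 p < ℓ + 1 := by
    rw [Real.logb_lt_iff_lt_rpow one_lt_two hp, ← Nat.cast_add_one, Real.rpow_natCast]
    exact_mod_cast Nat.lt_pow_succ_log_self one_lt_two p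
  have hloglog : Real.logb 2 (Real.logb 2 p) < lam + 1 := by
    rw [Real.logb_lt_iff_lt_rpow one_lt_two (by linarith), ← Nat.cast_add_one, Real.rpow_natCast]
    exact hlog_lt.trans_le (by exact_mod_cast Nat.lt_pow_succ_log_self one_lt_two ℓ)
  have hloglog_pos : 0 < Real.logb 2 (Real.logb 2 p) :=
    Real.logb_pos one_lt_two (by linarith)
  rw [div_mul_div_comm, le_div_iff₀ (by positivity)]
  have hNR : (q : ℝ) * (lam + 1) * N ≤ 10 * ℓ := by exact_mod_cast hN
  nlinarith [(by positivity : (0 : ℝ) ≤ q * N)]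

theorem exists_nonrectifiable_set_general {k p : ℕ} (hk : 3 ≤ k)
    (hsize : (2 : ℝ) ^ (32 * ((k : ℝ) - 1) ^ 2 * (Real.logb 2 (16 * ((k : ℝ) - 1))) ^ 2) ≤ p) :
    ∃ A : Finset (ZMod p),
      (A.card : ℝ) ≤ (10 / ((k : ℝ) - 1)) * (Real.logb 2 p / Real.logb 2 (Real.logb 2 p)) ∧
      ∀ (R : Type) [CommRing R] [IsDomain R] [CharZero R],
        ∀ (n : ℕ) (a : Fin n → ZMod p) (b : Fin n → R),
          Function.Injective a → Set.range a = ↑A → Function.Injective b →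
          ∃ f : MvPolynomial (Fin n) ℤ, f.totalDegree ≤ k ∧ l1Norm f ≤ k ∧
            ¬ (MvPolynomial.aeval a f = 0 ↔ MvPolynomial.aeval b f = 0) := by
  obtain ⟨s, rfl⟩ : ∃ s, k = s + 2 := ⟨k - 2, by omega⟩
  have hk1 : ((s + 2 : ℕ) : ℝ) - 1 = ((s + 1 : ℕ) : ℝ) := by push_cast; ring
  rw [hk1] at hsize ⊢
  have hℓ := le_natLog_of_two_rpow_le (by omega) hsize
  have hℓ2 : 2 ≤ Nat.log 2 p := le_trans (calc
    2 ≤ 32 * 1 * 1 := by norm_num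
    _ ≤ _ := by gcongr <;> exact Nat.one_le_pow _ _ (by omega)) hℓ
  have hp : 0 < p := Nat.pos_of_ne_zero (by rintro rfl; simp at hℓ2)
  obtain ⟨c, m, hcsm, hbudget⟩ := exists_digit_params (by omega) hℓ
  obtain ⟨S, hS, hpS, hcard⟩ := exists_isSumProdChain_mem (by omega) hp
    ((Nat.lt_pow_succ_log_self one_lt_two p).trans_le (Nat.pow_le_pow_right two_pos hcsm))
  refine ⟨S.image (↑), natCast_le_div_logb_logb s.succ_pos hℓ2
    (le_trans (by gcongr; exact card_image_le.trans hcard) hbudget), ?_⟩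
  intro R _ _ _ n a b _ ha _
  obtain ⟨f, hdeg, hl1, hf⟩ := hS.exists_not_iff (by omega) hpS (ZMod.natCast_self p)
    (Nat.cast_ne_zero.mpr hp.ne') a b fun y hy => by rw [ha]; exact mem_image_of_mem _ hy
  exact ⟨f, hdeg.trans (by omega), hl1, hf⟩

/-- For every `k ≥ 3` and every prime `p ≥ 2^{32 (k−1)² (log₂ (16(k−1)))²}` there is a set
`A ⊆ F_p` with `|A| ≤ (10/(k−1)) log₂ p / log₂ log₂ p` which is not Freiman
ring-isomorphic of order `k` to any subset of a characteristic-zero integral domain: for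
every enumeration `a` of `A`, every characteristic-zero integral domain `R` and every
injection `b` into `R`, some integer polynomial of degree at most `k` and ℓ1-norm at most
`k` vanishes at `a` but not at `b`, or vice versa. -/
theorem exists_nonrectifiable_set {k p : ℕ} (hk : 3 ≤ k) (hp : p.Prime)
    (hsize : (2 : ℝ) ^ (32 * ((k : ℝ) - 1) ^ 2 * (Real.logb 2 (16 * ((k : ℝ) - 1))) ^ 2) ≤ p) :
    ∃ A : Finset (ZMod p),
      (A.card : ℝ) ≤ (10 / ((k : ℝ) - 1)) * (Real.logb 2 p / Real.logb 2 (Real.logb 2 p)) ∧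
      ∀ (R : Type) [CommRing R] [IsDomain R] [CharZero R],
        ∀ (n : ℕ) (a : Fin n → ZMod p) (b : Fin n → R),
          Function.Injective a → Set.range a = ↑A → Function.Injective b →
          ∃ f : MvPolynomial (Fin n) ℤ, f.totalDegree ≤ k ∧ l1Norm f ≤ k ∧
            ¬ (MvPolynomial.aeval a f = 0 ↔ MvPolynomial.aeval b f = 0) :=
  exists_nonrectifiable_set_general hk hsize
end
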